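/- For every r ≥ 2 and sufficiently large n, f(n, r) ≥ r^⌈n/2⌉ and f(n, r) ≥ (r · ⌊r²/4⌋)^⌊n/4⌋, where f(n,r) is the maximum over A ⊆ {1,...,n} of the number of r-colourings of A with no monochromatic Schur triple. -/

import Mathlib

/-!
The odd numbers `P` and the top half `Q = (n/2, n]` of `[1, n]` are both sum-free. Split the
`r` colours into a block `C` of `⌊r/2⌋` colours and its complement of `⌈r/2⌉` colours, and colour
`P \ Q` from `C`, `Q \ P` from `Cᶜ` and `P ∩ Q` arbitrarily: every class of a colour in `C` then
lies in `P` and every other class in `Q`, so no class contains a Schur triple. Each of the three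
parts has at least `⌊n/4⌋` elements, and `⌊r/2⌋ ⌈r/2⌉ = ⌊r²/4⌋`. Colouring `P` alone arbitrarily
gives the first bound.
-/

open Finset

def SumFree (s : Finset ℕ) : Prop := ∀ x ∈ s, ∀ y ∈ s, x + y ∉ s

def schurColourings (r : ℕ) (A : Finset ℕ) : Finset (A → Fin r) :=
  univ.filter fun σ => ∀ x y z : A, σ x = σ y → σ y = σ z → (x : ℕ) + (y : ℕ) ≠ (z : ℕ)

lemma mem_schurColourings {r : ℕ} {A : Finset ℕ} {σ : A → Fin r} :
    σ ∈ schurColourings r A ↔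
      ∀ x y z : A, σ x = σ y → σ y = σ z → (x : ℕ) + (y : ℕ) ≠ (z : ℕ) := by
  simp [schurColourings]

lemma card_schurColourings_of_sumFree {r : ℕ} {A : Finset ℕ} (hA : SumFree A) :
    #(schurColourings r A) = r ^ #A := by
  have : schurColourings r A = univ :=
    eq_univ_of_forall fun σ => mem_schurColourings.2 fun x y z _ _ hz => hA x x.2 y y.2 (hz ▸ z.2)
  rw [this, card_univ, Fintype.card_fun, Fintype.card_coe, Fintype.card_fin]

lemma pow_mul_pow_mul_pow_le_card_schurColourings {r : ℕ} (C : Finset (Fin r))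
    {P Q : Finset ℕ} (hP : SumFree P) (hQ : SumFree Q) :
    #C ^ #(P \ Q) * #Cᶜ ^ #(Q \ P) * r ^ #(P ∩ Q) ≤ #(schurColourings r (P ∪ Q)) := by
  let S : (P ∪ Q : Finset ℕ) → Finset (Fin r) := fun x =>
    if (x : ℕ) ∈ Q then (if (x : ℕ) ∈ P then univ else Cᶜ) else C
  have hprod : ∏ x : (P ∪ Q : Finset ℕ), #(S x) =
      #C ^ #(P \ Q) * #Cᶜ ^ #(Q \ P) * r ^ #(P ∩ Q) := by
    simp only [S, apply_ite card, card_univ, Fintype.card_fin]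
    rw [prod_coe_sort (P ∪ Q) fun w => if w ∈ Q then (if w ∈ P then r else #Cᶜ) else #C]
    simp only [prod_ite, prod_const, filter_filter]
    rw [show {x ∈ P ∪ Q | x ∉ Q} = P \ Q by ext; simp; tauto,
      show {x ∈ P ∪ Q | x ∈ Q ∧ x ∉ P} = Q \ P by ext; simp; tauto,
      show {x ∈ P ∪ Q | x ∈ Q ∧ x ∈ P} = P ∩ Q by ext; simp; tauto]
    ring
  rw [← hprod, ← Fintype.card_piFinset]
  refine card_le_card fun σ hσ => mem_schurColourings.2 fun x y z hxy hyz hsum => ?_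
  have hS : ∀ w, σ w ∈ S w := Fintype.mem_piFinset.1 hσ
  have hzx : σ z = σ x := (hxy.trans hyz).symm
  by_cases hc : σ x ∈ C
  · have hmemP : ∀ w : (P ∪ Q : Finset ℕ), σ w = σ x → (w : ℕ) ∈ P := by
      intro w hw
      have hw' := hw ▸ hS w
      by_contra hwP
      have hwQ : (w : ℕ) ∈ Q := (mem_union.1 w.2).resolve_left hwP
      simp only [S, hwQ, hwP, if_true, if_false, mem_compl] at hw'
      exact hw' hc
    exact hP x (hmemP x rfl) y (hmemP y hxy.symm) (hsum ▸ hmemP z hzx)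
  · have hmemQ : ∀ w : (P ∪ Q : Finset ℕ), σ w = σ x → (w : ℕ) ∈ Q := by
      intro w hw
      have hw' := hw ▸ hS w
      by_contra hwQ
      simp only [S, hwQ, if_false] at hw'
      exact hc hw'
    exact hQ x (hmemQ x rfl) y (hmemQ y hxy.symm) (hsum ▸ hmemQ z hzx)

lemma sumFree_filter_odd (s : Finset ℕ) : SumFree {x ∈ s | Odd x} := by
  intro x hx y hy hxy
  simp only [mem_filter] at hx hy hxy
  exact Nat.not_even_iff_odd.2 hxy.2 (hx.2.add_odd hy.2)

def odds (n : ℕ) : Finset ℕ := {x ∈ Icc 1 n | Odd x}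

def upperHalf (n : ℕ) : Finset ℕ := Ioc (n / 2) n

lemma mem_odds {n x : ℕ} : x ∈ odds n ↔ 1 ≤ x ∧ x ≤ n ∧ x % 2 = 1 := by
  simp [odds, Nat.odd_iff, and_assoc]

lemma mem_upperHalf {n x : ℕ} : x ∈ upperHalf n ↔ n / 2 < x ∧ x ≤ n := mem_Ioc

lemma sumFree_upperHalf (n : ℕ) : SumFree (upperHalf n) := by
  intro x hx y hy hxy
  rw [mem_upperHalf] at hx hy hxy
  omega

lemma le_card_of_forall_lt_mem {s : Finset ℕ} {a m : ℕ} (h : ∀ i < m, a + 2 * i ∈ s) :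
    m ≤ #s :=
  le_card_of_inj_on_range _ h fun i _ j _ hij => by omega

lemma add_one_div_two_le_card_odds (n : ℕ) : (n + 1) / 2 ≤ #(odds n) :=
  le_card_of_forall_lt_mem (a := 1) fun i hi => by rw [mem_odds]; omega

lemma div_four_le_card_odds_sdiff_upperHalf (n : ℕ) : n / 4 ≤ #(odds n \ upperHalf n) :=
  le_card_of_forall_lt_mem (a := 1) fun i hi => by
    rw [mem_sdiff, mem_odds, mem_upperHalf]
    omega

lemma div_four_le_card_upperHalf_sdiff_odds (n : ℕ) : n / 4 ≤ #(upperHalf n \ odds n) :=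
  le_card_of_forall_lt_mem (a := 2 * (n / 4) + 2) fun i hi => by
    rw [mem_sdiff, mem_odds, mem_upperHalf]
    omega

lemma div_four_le_card_odds_inter_upperHalf (n : ℕ) : n / 4 ≤ #(odds n ∩ upperHalf n) :=
  le_card_of_forall_lt_mem (a := 2 * ((n / 2 + 1) / 2) + 1) fun i hi => by
    rw [mem_inter, mem_odds, mem_upperHalf]
    omega

lemma odds_union_upperHalf_subset (n : ℕ) : odds n ∪ upperHalf n ⊆ Icc 1 n :=
  union_subset (filter_subset _ _) fun x hx => by
    rw [mem_upperHalf] at hx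
    rw [mem_Icc]
    omega

lemma sq_div_four (r : ℕ) : r ^ 2 / 4 = r / 2 * (r - r / 2) := by
  rcases Nat.even_or_odd' r with ⟨s, rfl | rfl⟩
  · rw [show (2 * s) ^ 2 = 4 * (s * s) by ring, show 2 * s / 2 = s by omega,
      show 2 * s - s = s by omega]
    omega
  · rw [show (2 * s + 1) ^ 2 = 4 * (s * (s + 1)) + 1 by ring, show (2 * s + 1) / 2 = s by omega,
      show 2 * s + 1 - s = s + 1 by omega]
    omega

/-- For every `r ≥ 2` and sufficiently large `n`,
`f(n,r) ≥ r^⌈n/2⌉` and `f(n,r) ≥ (r⌊r²/4⌋)^⌊n/4⌋`, where `f(n,r)` is the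
maximum over `A ⊆ {1,...,n}` of the number of `r`-colourings of `A` with no
monochromatic Schur triple. -/
theorem f_lower_bounds (r : ℕ) (hr : 2 ≤ r) :
    ∃ N : ℕ, ∀ n ≥ N,
      r ^ ((n + 1) / 2) ≤
        (Finset.Icc 1 n).powerset.sup (fun A =>
          (Finset.univ.filter (fun σ : A → Fin r =>
            ∀ x y z : A, σ x = σ y → σ y = σ z → (x : ℕ) + (y : ℕ) ≠ (z : ℕ))).card) ∧
      (r * (r ^ 2 / 4)) ^ (n / 4) ≤
        (Finset.Icc 1 n).powerset.sup (fun A =>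
          (Finset.univ.filter (fun σ : A → Fin r =>
            ∀ x y z : A, σ x = σ y → σ y = σ z → (x : ℕ) + (y : ℕ) ≠ (z : ℕ))).card) := by
  refine ⟨0, fun n _ => ⟨?_, ?_⟩⟩
  · calc r ^ ((n + 1) / 2) ≤ r ^ #(odds n) :=
          Nat.pow_le_pow_right (by omega) (add_one_div_two_le_card_odds n)
      _ = #(schurColourings r (odds n)) :=
          (card_schurColourings_of_sumFree (sumFree_filter_odd _)).symm
      _ ≤ _ := le_sup (f := fun A => #(schurColourings r A)) (mem_powerset.2 (filter_subset _ _))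
  · let C : Finset (Fin r) := Iio ⟨r / 2, by omega⟩
    have hC : #C = r / 2 := Fin.card_Iio _
    have hCc : #Cᶜ = r - r / 2 := by rw [card_compl, Fintype.card_fin, hC]
    calc (r * (r ^ 2 / 4)) ^ (n / 4)
          = (r / 2) ^ (n / 4) * (r - r / 2) ^ (n / 4) * r ^ (n / 4) := by
          rw [sq_div_four]
          ring
      _ ≤ #C ^ #(odds n \ upperHalf n) * #Cᶜ ^ #(upperHalf n \ odds n) *
            r ^ #(odds n ∩ upperHalf n) := by
          rw [hC, hCc]
          gcongr
          exacts [by omega, div_four_le_card_odds_sdiff_upperHalf n, by omega,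
            div_four_le_card_upperHalf_sdiff_odds n, by omega,
            div_four_le_card_odds_inter_upperHalf n]
      _ ≤ #(schurColourings r (odds n ∪ upperHalf n)) :=
          pow_mul_pow_mul_pow_le_card_schurColourings C (sumFree_filter_odd _)
            (sumFree_upperHalf n)
      _ ≤ _ := le_sup (f := fun A => #(schurColourings r A))
          (mem_powerset.2 (odds_union_upperHalf_subset n))
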